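/- Let G = ⟨a⟩ × ⟨b⟩ be free abelian of rank two and A a Schur ring over G with ⟨a⟩ an A-subgroup. Suppose some singleton {a^{i_0} b^{j_0}} with j_0 ≠ 0 is a basic set of A, and let D be the basic set containing b. Then either D = {b}, or D = {a^{n_0} b, b} where n_0 satisfies 2 i_0 = n_0 j_0, or D = {a^{n_1} b, a^{-n_1} b^{-1}, b, b^{-1}} where n_1 satisfies 2 i_0 = n_1 j_0. -/

import Mathlib

/-!
Translation by a singleton basic set permutes the basic sets, and Schur's theorem on multipliers
holds in a torsion-free abelian group: the basic set of `g ^ m` consists of `m`-th powers of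
elements of the basic set of `g`. On an infinite cyclic A-subgroup `⟨e⟩` this forces the basic
sets to be all the singletons `{e ^ n}` or all the pairs `{e ^ n, e ^ (-n)}`.

If the basic sets in `⟨a⟩` are singletons, every basic set meets each coset of `⟨a⟩` at most
once, and a basic set containing an element of `b`-exponent `n` only has `b`-exponents `±n`.
Translating by the singleton `c = a ^ i₀ b ^ j₀` excludes `b`-exponent `-1` from `D`, so `D = {b}`.

If they are pairs, write `u ^ j₀ = c ^ y a ^ λ` for `u` of `b`-exponent `y`; the pair
`{a ^ λ, a ^ (-λ)}` and Schur's theorem show that every basic set is closed under the horizontal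
reflection in the line `2x = n₀ y` through `c`. Multiplying a basic set by the pair `{a ^ M, a ^ (-M)}`, with `M` the largest offset
of its elements from that line, shows that all its elements have the same distance from the line.
So the line is a cyclic A-subgroup containing the nontrivial singleton `c`, hence all its basic
sets are singletons, and `D` consists of `b` and its mirror image `a ^ n₀ b`.
-/

noncomputable def simpleQuantity (F : Type*) [Field F] {G : Type*} [Group G]
    (D : Finset G) : MonoidAlgebra F G :=
  ∑ g ∈ D, MonoidAlgebra.single g 1

structure SchurRing (F G : Type*) [Field F] [Group G] where
  parts : Set (Finset G)
  parts_nonempty : ∀ D ∈ parts, D.Nonempty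
  cover : ∀ g : G, ∃ D ∈ parts, g ∈ D
  eq_of_mem : ∀ D₁ ∈ parts, ∀ D₂ ∈ parts, ∀ g : G, g ∈ D₁ → g ∈ D₂ → D₁ = D₂
  one_mem : ({1} : Finset G) ∈ parts
  inv_mem : ∀ D ∈ parts, ∃ D' ∈ parts, ∀ g : G, g ∈ D' ↔ g⁻¹ ∈ D
  mul_mem : ∀ x ∈ Submodule.span F (simpleQuantity F '' parts),
    ∀ y ∈ Submodule.span F (simpleQuantity F '' parts),
    x * y ∈ Submodule.span F (simpleQuantity F '' parts)

noncomputable def SchurRing.span {F G : Type*} [Field F] [Group G] (A : SchurRing F G) :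
    Submodule F (MonoidAlgebra F G) :=
  Submodule.span F (simpleQuantity F '' A.parts)

def SchurRing.IsASet {F G : Type*} [Field F] [Group G] (A : SchurRing F G)
    (S : Set G) : Prop :=
  ∀ D ∈ A.parts, (∃ g ∈ D, g ∈ S) → ↑D ⊆ S

/-- The free abelian group of rank two, written multiplicatively. -/
abbrev Z2 := Multiplicative (ℤ × ℤ)

/-- The first generator `a` of `Z × Z`. -/
def ga : Z2 := Multiplicative.ofAdd (1, 0)

/-- The second generator `b` of `Z × Z`. -/
def gb : Z2 := Multiplicative.ofAdd (0, 1)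

open Finset Pointwise

-- `P n` plays the basic set of `n` in a Schur ring over `ℤ`, and `hmul` is Schur's theorem.
theorem Int.subset_pair_of_mul_compatible (P : ℤ → Finset ℤ) (hself : ∀ n, n ∈ P n)
    (hclass : ∀ m n, m ∈ P n → P m = P n) (hzero : P 0 = {0})
    (hmul : ∀ m ≠ 0, ∀ n, P (m * n) ⊆ (P n).image (m * ·)) (n : ℤ) : P n ⊆ {n, -n} := by
  have hunit : ∀ u ∈ P 1, u = 1 ∨ u = -1 := by
    intro u hu
    have hu0 : u ≠ 0 := by
      rintro rfl
      simpa [hclass 0 1 hu ▸ hzero] using hself 1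
    have hsub : P 1 ⊆ (P 1).image (u * ·) := by simpa [hclass u 1 hu] using hmul u hu0 1
    have hcard : #((P 1).image (u * ·)) = #(P 1) :=
      card_image_of_injective _ (mul_right_injective₀ hu0)
    obtain ⟨v, -, huv⟩ := mem_image.mp ((eq_of_subset_of_card_le hsub hcard.le) ▸ hself 1)
    exact Int.eq_one_or_neg_one_of_mul_eq_one huv
  rcases eq_or_ne n 0 with rfl | hn
  · simp [hzero]
  intro x hx
  obtain ⟨u, hu, rfl⟩ := mem_image.mp (hmul n hn 1 (by rwa [mul_one]))
  rcases hunit u hu with rfl | rfl <;> simp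

namespace SchurRing

section Group

variable {F G : Type*} [Field F] [Group G] (A : SchurRing F G)

noncomputable def basicSet (g : G) : Finset G := (A.cover g).choose

theorem basicSet_mem_parts (g : G) : A.basicSet g ∈ A.parts := (A.cover g).choose_spec.1

theorem mem_basicSet (g : G) : g ∈ A.basicSet g := (A.cover g).choose_spec.2

theorem basicSet_eq {E : Finset G} (hE : E ∈ A.parts) {g : G} (hg : g ∈ E) : A.basicSet g = E :=
  A.eq_of_mem _ (A.basicSet_mem_parts g) E hE g (A.mem_basicSet g) hg

theorem basicSet_eq_basicSet {g h : G} (hg : g ∈ A.basicSet h) : A.basicSet g = A.basicSet h :=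
  A.basicSet_eq (A.basicSet_mem_parts h) hg

theorem basicSet_one : A.basicSet 1 = {1} := A.basicSet_eq A.one_mem (mem_singleton_self 1)

theorem simpleQuantity_mem_span {E : Finset G} (hE : E ∈ A.parts) :
    simpleQuantity F E ∈ A.span :=
  Submodule.subset_span ⟨E, hE, rfl⟩

theorem pow_mem_span {x : MonoidAlgebra F G} (hx : x ∈ A.span) {n : ℕ} (hn : n ≠ 0) :
    x ^ n ∈ A.span := by
  induction n with
  | zero => exact absurd rfl hn
  | succ n ih =>
    rcases eq_or_ne n 0 with rfl | hn'
    · simpa using hx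
    · exact pow_succ x n ▸ A.mul_mem _ (ih hn') _ hx

theorem simpleQuantity_eq_map (R : Type*) [Field R] (C : Finset G) :
    simpleQuantity R C =
      MonoidAlgebra.mapRingHom G (Nat.castRingHom R) (∑ c ∈ C, MonoidAlgebra.single c (1 : ℕ)) := by
  simp [simpleQuantity]

variable [DecidableEq G]

theorem simpleQuantity_coeff (D : Finset G) (g : G) :
    (simpleQuantity F D).coeff g = if g ∈ D then 1 else 0 := by
  simp [simpleQuantity, MonoidAlgebra.coeff_sum, Finsupp.single_apply]

theorem simpleQuantity_mul_coeff (S E : Finset G) (z : G) :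
    (simpleQuantity F S * simpleQuantity F E).coeff z = #{p ∈ S ×ˢ E | p.1 * p.2 = z} := by
  simp only [simpleQuantity, sum_mul_sum, MonoidAlgebra.single_mul_single, mul_one,
    MonoidAlgebra.coeff_sum, sum_apply', MonoidAlgebra.coeff_single, Finsupp.single_apply]
  rw [← sum_product', card_filter]
  push_cast
  rfl

theorem coeff_eq_of_mem_span {x : MonoidAlgebra F G} (hx : x ∈ A.span) {E : Finset G}
    (hE : E ∈ A.parts) {g g' : G} (hg : g ∈ E) (hg' : g' ∈ E) : x.coeff g = x.coeff g' := by
  induction hx using Submodule.span_induction with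
  | mem _ hx =>
    obtain ⟨C, hC, rfl⟩ := hx
    have key : ∀ h ∈ E, h ∈ C ↔ E = C := fun h hh =>
      ⟨fun hC' => A.eq_of_mem E hE C hC h hh hC', fun h' => h' ▸ hh⟩
    simp only [simpleQuantity_coeff, key g hg, key g' hg']
  | zero => rfl
  | add x y _ _ hx hy => simp only [MonoidAlgebra.coeff_add, Finsupp.add_apply, hx, hy]
  | smul c x _ hx => simp only [MonoidAlgebra.coeff_smul, Finsupp.smul_apply, hx]

theorem inv_mem_parts {E : Finset G} (hE : E ∈ A.parts) : E⁻¹ ∈ A.parts := by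
  obtain ⟨E', hE', h⟩ := A.inv_mem E hE
  convert hE'
  ext g
  rw [mem_inv', h]

theorem basicSet_inv (g : G) : A.basicSet g⁻¹ = (A.basicSet g)⁻¹ :=
  A.basicSet_eq (A.inv_mem_parts (A.basicSet_mem_parts g)) (inv_mem_inv (A.mem_basicSet g))

variable [CharZero F]

theorem basicSet_subset_mul {S E : Finset G} (hS : S ∈ A.parts) (hE : E ∈ A.parts) {z : G}
    (hz : z ∈ S * E) : A.basicSet z ⊆ S * E := by
  intro z' hz'
  -- the coefficient of `S * E` at `z` counts the ways of writing `z = s * e`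
  have hconst := A.coeff_eq_of_mem_span
    (A.mul_mem _ (A.simpleQuantity_mem_span hS) _ (A.simpleQuantity_mem_span hE))
    (A.basicSet_mem_parts z) hz' (A.mem_basicSet z)
  rw [simpleQuantity_mul_coeff, simpleQuantity_mul_coeff, Nat.cast_inj] at hconst
  obtain ⟨s, hs, e, he, rfl⟩ := mem_mul.mp hz
  obtain ⟨p, hp⟩ : {p ∈ S ×ˢ E | p.1 * p.2 = z'}.Nonempty := by
    rw [← card_pos, hconst]
    exact card_pos.mpr ⟨(s, e), mem_filter.mpr ⟨mem_product.mpr ⟨hs, he⟩, rfl⟩⟩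
  simp only [mem_filter, mem_product] at hp
  exact hp.2 ▸ mul_mem_mul hp.1.1 hp.1.2

theorem subset_mul_of_mul_mem {S E : Finset G} (hS : S ∈ A.parts) (hE : E ∈ A.parts) {s v : G}
    (hs : s ∈ S) (hv : v ∈ E) (hsv : s * v ∈ E) : E ⊆ S * E := by
  simpa only [A.basicSet_eq hE hsv] using A.basicSet_subset_mul hS hE (mul_mem_mul hs hv)

theorem basicSet_mul_subset {t : G} (ht : {t} ∈ A.parts) {E : Finset G} (hE : E ∈ A.parts)
    {g : G} (hg : g ∈ E) : A.basicSet (t * g) ⊆ t • E := by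
  simpa only [singleton_mul] using
    A.basicSet_subset_mul ht hE (mul_mem_mul (mem_singleton_self t) hg)

theorem smul_mem_parts {t : G} (ht : {t} ∈ A.parts) {E : Finset G} (hE : E ∈ A.parts) :
    t • E ∈ A.parts := by
  obtain ⟨g, hg⟩ := A.parts_nonempty E hE
  have hback := A.basicSet_mul_subset (t := t⁻¹) (by simpa using A.inv_mem_parts ht)
    (A.basicSet_mem_parts (t * g)) (A.mem_basicSet (t * g))
  rw [inv_mul_cancel_left, A.basicSet_eq hE hg] at hback
  have heq : t • E = A.basicSet (t * g) :=
    Subset.antisymm (by simpa [subset_smul_finset_iff] using hback) (A.basicSet_mul_subset ht hE hg)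
  exact heq ▸ A.basicSet_mem_parts _

theorem basicSet_mul {t : G} (ht : {t} ∈ A.parts) (g : G) :
    A.basicSet (t * g) = t • A.basicSet g :=
  A.basicSet_eq (A.smul_mem_parts ht (A.basicSet_mem_parts g))
    (smul_mem_smul_finset (A.mem_basicSet g))

theorem zpow_singleton_mem_parts {t : G} (ht : {t} ∈ A.parts) (k : ℤ) : {t ^ k} ∈ A.parts := by
  induction k using Int.induction_on with
  | zero => simpa using A.one_mem
  | succ k ih =>
    have := A.smul_mem_parts ht ih
    rwa [smul_finset_singleton, smul_eq_mul, ← zpow_one_add, add_comm] at this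
  | pred k ih =>
    have := A.smul_mem_parts (t := t ^ (-1 : ℤ)) (by simpa using A.inv_mem_parts ht) ih
    rwa [smul_finset_singleton, smul_eq_mul, ← zpow_add, neg_add_eq_sub] at this

end Group

section CommGroup

variable {F G : Type*} [Field F] [CommGroup G] [DecidableEq G]

theorem simpleQuantity_pow_char (p : ℕ) [Fact p.Prime] (hp : Function.Injective (· ^ p : G → G))
    (C : Finset G) : simpleQuantity (ZMod p) C ^ p = simpleQuantity (ZMod p) (C.image (· ^ p)) := by
  have : CharP (MonoidAlgebra (ZMod p) G) p := charP_of_injective_algebraMap' (ZMod p) p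
  simp [simpleQuantity, sum_pow_char, sum_image fun x _ y _ h => hp h, MonoidAlgebra.single_pow]

variable (A : SchurRing F G) [CharZero F] [IsMulTorsionFree G]

theorem basicSet_pow_subset_of_prime {C : Finset G} (hC : C ∈ A.parts) {g : G} (hg : g ∈ C)
    {p : ℕ} (hp : p.Prime) : A.basicSet (g ^ p) ⊆ C.image (· ^ p) := by
  have := Fact.mk hp
  intro h hh
  -- `N x` counts the ways of writing `x` as a product of `p` elements of `C`: it is constant
  -- on basic sets, and by Frobenius it is `1` on `C.image (· ^ p)` and `0` elsewhere mod `p`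
  set N := ((∑ c ∈ C, MonoidAlgebra.single c (1 : ℕ)) ^ p).coeff
  have hN : N h = N (g ^ p) := by
    have := A.coeff_eq_of_mem_span (A.pow_mem_span (A.simpleQuantity_mem_span hC) hp.ne_zero)
      (A.basicSet_mem_parts (g ^ p)) hh (A.mem_basicSet _)
    rwa [simpleQuantity_eq_map, ← map_pow, MonoidAlgebra.coeff_mapRingHom,
      MonoidAlgebra.coeff_mapRingHom, eq_natCast, eq_natCast, Nat.cast_inj] at this
  have hmod : ∀ x, (N x : ZMod p) = if x ∈ C.image (· ^ p) then 1 else 0 := fun x => by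
    rw [← simpleQuantity_coeff, ← simpleQuantity_pow_char p (pow_left_injective hp.ne_zero),
      simpleQuantity_eq_map, ← map_pow, MonoidAlgebra.coeff_mapRingHom]
    rfl
  have := congrArg (Nat.cast : ℕ → ZMod p) hN
  rw [hmod, hmod, if_pos (mem_image_of_mem _ hg)] at this
  by_contra hne
  rw [if_neg hne] at this
  exact zero_ne_one this

theorem basicSet_pow_subset {C : Finset G} (hC : C ∈ A.parts) {g : G} (hg : g ∈ C)
    {n : ℕ} (hn : n ≠ 0) : A.basicSet (g ^ n) ⊆ C.image (· ^ n) := by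
  induction n using Nat.recOnMul generalizing C g with
  | zero => exact absurd rfl hn
  | one => simp [A.basicSet_eq hC hg]
  | prime p hp => exact A.basicSet_pow_subset_of_prime hC hg hp
  | mul a b iha ihb =>
    have hab := mul_ne_zero_iff.mp hn
    calc A.basicSet (g ^ (a * b)) = A.basicSet ((g ^ a) ^ b) := by rw [pow_mul]
      _ ⊆ (A.basicSet (g ^ a)).image (· ^ b) :=
        ihb (A.basicSet_mem_parts _) (A.mem_basicSet _) hab.2
      _ ⊆ (C.image (· ^ a)).image (· ^ b) := image_subset_image (iha hC hg hab.1)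
      _ = C.image (· ^ (a * b)) := by simp [image_image, Function.comp_def, pow_mul]

theorem basicSet_zpow_subset {C : Finset G} (hC : C ∈ A.parts) {g : G} (hg : g ∈ C)
    {m : ℤ} (hm : m ≠ 0) : A.basicSet (g ^ m) ⊆ C.image (· ^ m) := by
  obtain ⟨n, rfl | rfl⟩ := m.eq_nat_or_neg
  · simpa using A.basicSet_pow_subset hC hg (n := n) (by omega)
  · have := inv_subset_inv (A.basicSet_pow_subset hC hg (n := n) (by omega))
    simpa [A.basicSet_inv, ← image_inv_eq_inv, image_image, Function.comp_def] using this

theorem eq_one_of_mul_mem {t : G} (ht : {t} ∈ A.parts) {E : Finset G} (hE : E ∈ A.parts)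
    {v : G} (hv : v ∈ E) (htv : t * v ∈ E) : t = 1 := by
  have hinv : t • E = E :=
    A.eq_of_mem _ (A.smul_mem_parts ht hE) E hE _ (smul_mem_smul_finset hv) htv
  have hprod : ∏ x ∈ t • E, x = t ^ #E * ∏ x ∈ E, x := by
    rw [smul_finset_def, prod_image fun x _ y _ h => MulAction.injective t h]
    simp only [smul_eq_mul]
    rw [prod_mul_distrib, prod_const]
  have htE : t ^ #E = 1 := by simpa [hinv] using hprod.symm
  exact (pow_eq_one_iff_left (card_ne_zero_of_mem hv)).mp htE

end CommGroup

section Cyclic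

variable {F G : Type*} [Field F] [CharZero F] [CommGroup G] [IsMulTorsionFree G] [DecidableEq G]
  (A : SchurRing F G) {e : G}

theorem basicSet_zpow_subset_pair (he : e ≠ 1) (hA : A.IsASet (Subgroup.zpowers e)) (n : ℤ) :
    A.basicSet (e ^ n) ⊆ {e ^ n, e ^ (-n)} := by
  have hinj : Function.Injective (e ^ · : ℤ → G) :=
    injective_zpow_iff_not_isOfFinOrder.mpr (not_isOfFinOrder_of_isMulTorsionFree he)
  have hpow : ∀ n : ℤ, ∀ x ∈ A.basicSet (e ^ n), ∃ k : ℤ, e ^ k = x := fun n x hx =>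
    Subgroup.mem_zpowers_iff.mp <| hA _ (A.basicSet_mem_parts _)
      ⟨e ^ n, A.mem_basicSet _, Subgroup.zpow_mem_zpowers e n⟩ hx
  let P : ℤ → Finset ℤ := fun n => (A.basicSet (e ^ n)).preimage (e ^ ·) hinj.injOn
  have hP : P n ⊆ {n, -n} := by
    refine Int.subset_pair_of_mul_compatible P (fun n => ?_) (fun m n hm => ?_) ?_
      (fun m hm n k hk => ?_) n
    · simpa [P] using A.mem_basicSet (e ^ n)
    · simp only [P, A.basicSet_eq_basicSet (mem_preimage.mp hm)]
    · ext k
      simp [P, A.basicSet_one, he]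
    · obtain ⟨y, hy, hyk⟩ := mem_image.mp <| A.basicSet_zpow_subset
        (A.basicSet_mem_parts (e ^ n)) (A.mem_basicSet _) hm
        (by simpa [P, ← zpow_mul, mul_comm] using hk)
      obtain ⟨j, rfl⟩ := hpow n y hy
      refine mem_image.mpr ⟨j, by simpa [P] using hy, hinj ?_⟩
      simpa [← zpow_mul, mul_comm] using hyk
  intro x hx
  obtain ⟨k, rfl⟩ := hpow n x hx
  rcases mem_insert.mp (hP (mem_preimage.mpr hx)) with rfl | hk
  · exact mem_insert_self _ _
  · simp [mem_singleton.mp hk]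

theorem basicSet_zpow_eq_singleton (he : e ≠ 1) (hA : A.IsASet (Subgroup.zpowers e)) {n : ℤ}
    (hn : e ^ (-n) ∉ A.basicSet (e ^ n)) : A.basicSet (e ^ n) = {e ^ n} := by
  refine Subset.antisymm (fun x hx => ?_) (by simpa using A.mem_basicSet (e ^ n))
  rcases mem_insert.mp (A.basicSet_zpow_subset_pair he hA n hx) with rfl | hx'
  · exact mem_singleton_self _
  · exact absurd (mem_singleton.mp hx' ▸ hx) hn

theorem zpow_singleton_mem_parts_of_ne_zero (he : e ≠ 1) (hA : A.IsASet (Subgroup.zpowers e))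
    {k : ℤ} (hk : k ≠ 0) (hs : {e ^ k} ∈ A.parts) (n : ℤ) : {e ^ n} ∈ A.parts := by
  by_cases hn : e ^ (-n) ∈ A.basicSet (e ^ n)
  · have hshift : e ^ (k - n) ∈ A.basicSet (e ^ (k + n)) := by
      rw [zpow_add, A.basicSet_mul hs, sub_eq_add_neg, zpow_add]
      exact smul_mem_smul_finset hn
    have hinj : Function.Injective (e ^ · : ℤ → G) :=
      injective_zpow_iff_not_isOfFinOrder.mpr (not_isOfFinOrder_of_isMulTorsionFree he)
    have := A.basicSet_zpow_subset_pair he hA (k + n) hshift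
    simp only [mem_insert, mem_singleton, hinj.eq_iff] at this
    obtain rfl : n = 0 := by omega
    simpa using A.one_mem
  · exact A.basicSet_zpow_eq_singleton he hA hn ▸ A.basicSet_mem_parts _

theorem zpow_singleton_or_pair (he : e ≠ 1) (hA : A.IsASet (Subgroup.zpowers e)) :
    (∀ n : ℤ, {e ^ n} ∈ A.parts) ∨ ∀ n : ℤ, A.basicSet (e ^ n) = {e ^ n, e ^ (-n)} := by
  by_cases h : ∃ k : ℤ, k ≠ 0 ∧ {e ^ k} ∈ A.parts
  · obtain ⟨k, hk, hs⟩ := h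
    exact .inl (A.zpow_singleton_mem_parts_of_ne_zero he hA hk hs)
  refine .inr fun n => Subset.antisymm (A.basicSet_zpow_subset_pair he hA n) ?_
  rcases eq_or_ne n 0 with rfl | hn
  · simp [A.basicSet_one]
  refine insert_subset (A.mem_basicSet _) (singleton_subset_iff.mpr ?_)
  by_contra hnot
  exact h ⟨n, hn, A.basicSet_zpow_eq_singleton he hA hnot ▸ A.basicSet_mem_parts _⟩

end Cyclic

end SchurRing

namespace Z2

def pt (x y : ℤ) : Z2 := Multiplicative.ofAdd (x, y)

def xc (g : Z2) : ℤ := (Multiplicative.toAdd g).1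

def yc (g : Z2) : ℤ := (Multiplicative.toAdd g).2

/-- Twice the signed horizontal distance from `g` to the line `2x = n y`. -/
def offset (n : ℤ) (g : Z2) : ℤ := 2 * xc g - n * yc g

/-- The mirror image of `g` in the line `2x = n y`, along the horizontal. -/
def reflect (n : ℤ) (g : Z2) : Z2 := pt (n * yc g - xc g) (yc g)

@[simp] theorem xc_pt (x y : ℤ) : xc (pt x y) = x := rfl
@[simp] theorem yc_pt (x y : ℤ) : yc (pt x y) = y := rfl
@[simp] theorem xc_one : xc 1 = 0 := rfl
@[simp] theorem yc_one : yc 1 = 0 := rfl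
@[simp] theorem xc_mul (g h : Z2) : xc (g * h) = xc g + xc h := rfl
@[simp] theorem yc_mul (g h : Z2) : yc (g * h) = yc g + yc h := rfl
@[simp] theorem xc_inv (g : Z2) : xc g⁻¹ = -xc g := rfl
@[simp] theorem yc_inv (g : Z2) : yc g⁻¹ = -yc g := rfl
@[simp] theorem xc_zpow (g : Z2) (k : ℤ) : xc (g ^ k) = k * xc g := by simp [xc]
@[simp] theorem yc_zpow (g : Z2) (k : ℤ) : yc (g ^ k) = k * yc g := by simp [yc]
@[simp] theorem xc_ga : xc ga = 1 := rfl
@[simp] theorem yc_ga : yc ga = 0 := rfl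
@[simp] theorem xc_gb : xc gb = 0 := rfl
@[simp] theorem yc_gb : yc gb = 1 := rfl
@[simp] theorem xc_reflect (n : ℤ) (g : Z2) : xc (reflect n g) = n * yc g - xc g := rfl
@[simp] theorem yc_reflect (n : ℤ) (g : Z2) : yc (reflect n g) = yc g := rfl

theorem ext_iff {g h : Z2} : g = h ↔ xc g = xc h ∧ yc g = yc h :=
  Multiplicative.toAdd.injective.eq_iff.symm.trans Prod.ext_iff

@[simp] theorem ga_zpow (k : ℤ) : ga ^ k = pt k 0 := ext_iff.mpr ⟨by simp, by simp⟩

@[simp] theorem ga_zpow_mul_gb_zpow (i j : ℤ) : ga ^ i * gb ^ j = pt i j :=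
  ext_iff.mpr ⟨by simp, by simp⟩

theorem offset_pt (n x y : ℤ) : offset n (pt x y) = 2 * x - n * y := rfl

theorem offset_mul (n : ℤ) (g h : Z2) : offset n (g * h) = offset n g + offset n h := by
  simp only [offset, xc_mul, yc_mul]; ring

theorem offset_reflect (n : ℤ) (g : Z2) : offset n (reflect n g) = -offset n g := by
  simp only [offset, xc_reflect, yc_reflect]; ring

theorem exists_zpowers_eq_offset_eq_zero (n : ℤ) :
    ∃ e : Z2, e ≠ 1 ∧ ∀ g, g ∈ Subgroup.zpowers e ↔ offset n g = 0 := by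
  obtain ⟨m, rfl | rfl⟩ := Int.even_or_odd' n
  · refine ⟨pt m 1, fun h => by simpa using congrArg yc h, fun g => ?_⟩
    simp only [Subgroup.mem_zpowers_iff, offset]
    refine ⟨?_, fun h => ⟨yc g, ext_iff.mpr ⟨by simp; linarith, by simp⟩⟩⟩
    rintro ⟨k, rfl⟩
    simp; ring
  · refine ⟨pt (2 * m + 1) 2, fun h => by simpa using congrArg yc h, fun g => ?_⟩
    simp only [Subgroup.mem_zpowers_iff, offset]
    refine ⟨?_, fun h => ⟨xc g - m * yc g, ext_iff.mpr ⟨?_, ?_⟩⟩⟩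
    · rintro ⟨k, rfl⟩
      simp; ring
    · simp; linear_combination m * h
    · simp; linear_combination h

end Z2

open Z2

namespace SchurRing

variable {F : Type*} [Field F] [CharZero F] (A : SchurRing F Z2)

theorem eq_of_mem_of_yc_eq (hsing : ∀ x : ℤ, {pt x 0} ∈ A.parts) {E : Finset Z2}
    (hE : E ∈ A.parts) {u v : Z2} (hu : u ∈ E) (hv : v ∈ E) (h : yc u = yc v) : u = v := by
  have htv : pt (xc u - xc v) 0 * v = u := ext_iff.mpr ⟨by simp, by simp [h]⟩
  rw [A.eq_one_of_mul_mem (hsing _) hE hv (by rwa [htv]), one_mul] at htv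
  exact htv.symm

theorem image_yc_basicSet_subset (hsing : ∀ x : ℤ, {pt x 0} ∈ A.parts) (g : Z2) :
    (A.basicSet g).image yc ⊆ {yc g, -yc g} := by
  let P : ℤ → Finset ℤ := fun n => (A.basicSet (pt 0 n)).image yc
  have hP : ∀ g, (A.basicSet g).image yc = P (yc g) := by
    intro g
    have : g = pt (xc g) 0 * pt 0 (yc g) := ext_iff.mpr ⟨by simp, by simp⟩
    conv_lhs => rw [this, A.basicSet_mul (hsing _), smul_finset_def, image_image]
    simp [P, Function.comp_def]
  rw [hP]
  refine Int.subset_pair_of_mul_compatible P (fun n => ?_) (fun m n hm => ?_) ?_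
    (fun m hm n k hk => ?_) _
  · exact mem_image_of_mem yc (A.mem_basicSet (pt 0 n))
  · obtain ⟨u, hu, rfl⟩ := mem_image.mp hm
    rw [← hP, A.basicSet_eq_basicSet hu]
  · simp [P, show pt 0 0 = 1 from rfl, A.basicSet_one]
  · have hpow : pt 0 (m * n) = pt 0 n ^ m := ext_iff.mpr ⟨by simp, by simp⟩
    obtain ⟨u, hu, rfl⟩ := mem_image.mp hk
    rw [hpow] at hu
    obtain ⟨v, hv, rfl⟩ := mem_image.mp
      (A.basicSet_zpow_subset (A.basicSet_mem_parts _) (A.mem_basicSet _) hm hu)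
    rw [yc_zpow]
    exact mem_image_of_mem (m * ·) (mem_image_of_mem yc hv)

theorem basicSet_gb_eq_singleton (hsing : ∀ x : ℤ, {pt x 0} ∈ A.parts) {c : Z2}
    (hc : {c} ∈ A.parts) (hyc : yc c ≠ 0) : A.basicSet gb = {gb} := by
  refine eq_singleton_iff_unique_mem.mpr ⟨A.mem_basicSet gb, fun u hu => ?_⟩
  have hlev := A.image_yc_basicSet_subset hsing gb (mem_image_of_mem yc hu)
  simp only [yc_gb, mem_insert, mem_singleton] at hlev
  refine A.eq_of_mem_of_yc_eq hsing (A.basicSet_mem_parts gb) hu (A.mem_basicSet gb) ?_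
  rcases hlev with h | h
  · simpa using h
  have hcu : c * u ∈ A.basicSet (c * gb) := by
    rw [A.basicSet_mul hc]
    exact smul_mem_smul_finset hu
  have := A.image_yc_basicSet_subset hsing (c * gb) (mem_image_of_mem yc hcu)
  simp only [yc_mul, h, yc_gb, mem_insert, mem_singleton] at this
  omega

section HorizontalPairs

variable {A}

theorem exists_mem_xc_add_xc_eq (hpair : ∀ x : ℤ, A.basicSet (pt x 0) = {pt x 0, pt (-x) 0})
    {i₀ j₀ : ℤ} (hj₀ : j₀ ≠ 0) (hc : {pt i₀ j₀} ∈ A.parts) {E : Finset Z2} (hE : E ∈ A.parts)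
    {u : Z2} (hu : u ∈ E) : ∃ v ∈ E, yc v = yc u ∧ j₀ * (xc u + xc v) = 2 * i₀ * yc u := by
  set l := j₀ * xc u - i₀ * yc u
  have hpow : u ^ j₀ = pt i₀ j₀ ^ yc u * pt l 0 :=
    ext_iff.mpr ⟨by simp [l]; ring, by simp; ring⟩
  have hmem : pt i₀ j₀ ^ yc u * pt (-l) 0 ∈ A.basicSet (u ^ j₀) := by
    rw [hpow, A.basicSet_mul (A.zpow_singleton_mem_parts hc _), hpair]
    exact smul_mem_smul_finset (by simp)
  obtain ⟨v, hv, hvu⟩ := mem_image.mp (A.basicSet_zpow_subset hE hu hj₀ hmem)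
  have hx := congrArg xc hvu
  have hy := congrArg yc hvu
  simp only [xc_zpow, xc_mul, xc_pt, yc_zpow, yc_mul, yc_pt, add_zero] at hx hy
  exact ⟨v, hv, mul_left_cancel₀ hj₀ (by linarith), by linear_combination hx⟩

theorem exists_reflect_mem (hpair : ∀ x : ℤ, A.basicSet (pt x 0) = {pt x 0, pt (-x) 0})
    {i₀ j₀ : ℤ} (hj₀ : j₀ ≠ 0) (hc : {pt i₀ j₀} ∈ A.parts) :
    ∃ n₀ : ℤ, 2 * i₀ = n₀ * j₀ ∧ ∀ E ∈ A.parts, ∀ u ∈ E, reflect n₀ u ∈ E := by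
  obtain ⟨w, -, -, hw⟩ :=
    exists_mem_xc_add_xc_eq hpair hj₀ hc (A.basicSet_mem_parts gb) (A.mem_basicSet gb)
  simp only [xc_gb, yc_gb, zero_add, mul_one] at hw
  refine ⟨xc w, by linarith, fun E hE u hu => ?_⟩
  obtain ⟨v, hv, hyv, hxv⟩ := exists_mem_xc_add_xc_eq hpair hj₀ hc hE hu
  convert hv using 1
  refine ext_iff.mpr ⟨mul_left_cancel₀ hj₀ ?_, by simp [hyv]⟩
  simp only [xc_reflect]
  linear_combination yc u * hw - hxv

theorem abs_offset_eq_of_mem (hpair : ∀ x : ℤ, A.basicSet (pt x 0) = {pt x 0, pt (-x) 0})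
    {n₀ : ℤ} (hrefl : ∀ E ∈ A.parts, ∀ u ∈ E, reflect n₀ u ∈ E) {E : Finset Z2}
    (hE : E ∈ A.parts) {u w : Z2} (hu : u ∈ E) (hw : w ∈ E) :
    |offset n₀ u| = |offset n₀ w| := by
  obtain ⟨m, hm, hmax⟩ := E.exists_max_image (offset n₀) ⟨u, hu⟩
  set M := offset n₀ m
  have hbound : ∀ z ∈ E, -M ≤ offset n₀ z ∧ offset n₀ z ≤ M := fun z hz =>
    ⟨by linarith [offset_reflect n₀ z ▸ hmax _ (hrefl E hE z hz)], hmax z hz⟩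
  -- translating the mirror image of `m` by `a ^ M` gives back `m`
  have hsub : E ⊆ A.basicSet (pt M 0) * E := by
    refine A.subset_mul_of_mul_mem (A.basicSet_mem_parts _) hE (A.mem_basicSet _)
      (hrefl E hE m hm) ?_
    convert hm using 1
    exact ext_iff.mpr ⟨by simp [M, offset]; ring, by simp⟩
  suffices ∀ z ∈ E, |offset n₀ z| = M from (this u hu).trans (this w hw).symm
  intro z hz
  obtain ⟨s, hs, y, hy, rfl⟩ := mem_mul.mp (hsub hz)
  have hM := hbound m hm
  have hy' := hbound y hy
  have hz' := hbound _ hz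
  rw [hpair, mem_insert, mem_singleton] at hs
  rw [abs_eq (by omega)]
  rcases hs with rfl | rfl <;> simp only [offset_mul, offset_pt] at hz' ⊢ <;> omega

theorem isASet_zpowers (hpair : ∀ x : ℤ, A.basicSet (pt x 0) = {pt x 0, pt (-x) 0})
    {n₀ : ℤ} (hrefl : ∀ E ∈ A.parts, ∀ u ∈ E, reflect n₀ u ∈ E) {e : Z2}
    (he : ∀ g, g ∈ Subgroup.zpowers e ↔ offset n₀ g = 0) : A.IsASet (Subgroup.zpowers e) := by
  rintro E hE ⟨g, hg, hge⟩ z hz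
  rw [SetLike.mem_coe, he] at hge ⊢
  simpa [hge] using abs_offset_eq_of_mem hpair hrefl hE hz hg

theorem basicSet_gb_eq_pair (hpair : ∀ x : ℤ, A.basicSet (pt x 0) = {pt x 0, pt (-x) 0})
    {i₀ j₀ : ℤ} (hj₀ : j₀ ≠ 0) (hc : {pt i₀ j₀} ∈ A.parts) :
    ∃ n₀ : ℤ, 2 * i₀ = n₀ * j₀ ∧ A.basicSet gb = {pt n₀ 1, gb} := by
  obtain ⟨n₀, hn₀, hrefl⟩ := exists_reflect_mem hpair hj₀ hc
  obtain ⟨e, he1, he⟩ := exists_zpowers_eq_offset_eq_zero n₀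
  have hA := isASet_zpowers hpair hrefl he
  obtain ⟨k, hk⟩ := Subgroup.mem_zpowers_iff.mp ((he (pt i₀ j₀)).mpr (by rw [offset_pt]; linarith))
  have hk0 : k ≠ 0 := by
    rintro rfl
    simpa [eq_comm, hj₀] using congrArg yc hk
  have hsing : ∀ t, offset n₀ t = 0 → {t} ∈ A.parts := fun t ht => by
    obtain ⟨m, rfl⟩ := Subgroup.mem_zpowers_iff.mp ((he t).mpr ht)
    exact A.zpow_singleton_mem_parts_of_ne_zero he1 hA hk0 (hk ▸ hc) m
  have hinj : ∀ u ∈ A.basicSet gb, ∀ w ∈ A.basicSet gb, offset n₀ u = offset n₀ w → u = w := by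
    intro u hu w hw h
    refine mul_inv_eq_one.mp (A.eq_one_of_mul_mem (hsing _ ?_) (A.basicSet_mem_parts gb) hw ?_)
    · rw [offset_mul, h, ← offset_mul, mul_inv_cancel, offset, xc_one, yc_one]; ring
    · rwa [inv_mul_cancel_right]
  have hβ : pt n₀ 1 ∈ A.basicSet gb := by
    convert hrefl _ (A.basicSet_mem_parts gb) gb (A.mem_basicSet gb) using 1
    exact ext_iff.mpr ⟨by simp, by simp⟩
  refine ⟨n₀, hn₀, Subset.antisymm (fun u hu => ?_)
    (insert_subset hβ (by simpa using A.mem_basicSet gb))⟩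
  rcases abs_eq_abs.mp (abs_offset_eq_of_mem hpair hrefl (A.basicSet_mem_parts gb) hu
    (A.mem_basicSet gb)) with h | h
  · exact mem_insert_of_mem (mem_singleton.mpr (hinj u hu gb (A.mem_basicSet gb) h))
  · refine mem_insert.mpr (.inl (hinj u hu _ hβ ?_))
    rw [h, offset, offset_pt, xc_gb, yc_gb]; ring

end HorizontalPairs

end SchurRing

/-- If some singleton `{a^{i₀} b^{j₀}}` with `j₀ ≠ 0` is a basic set, the basic
set containing `b` takes one of three shapes. -/
theorem basic_set_containing_b_of_singleton {F : Type*} [Field F] [CharZero F]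
    (A : SchurRing F Z2) (ha : A.IsASet ↑(Subgroup.zpowers ga))
    (i₀ j₀ : ℤ) (hj₀ : j₀ ≠ 0)
    (hsingle : ({ga ^ i₀ * gb ^ j₀} : Finset Z2) ∈ A.parts)
    (D : Finset Z2) (hD : D ∈ A.parts) (hbD : gb ∈ D) :
    D = {gb} ∨
    (∃ n₀ : ℤ, 2 * i₀ = n₀ * j₀ ∧ D = {ga ^ n₀ * gb, gb}) ∨
    (∃ n₁ : ℤ, 2 * i₀ = n₁ * j₀ ∧ D = {ga ^ n₁ * gb, ga ^ (-n₁) * gb⁻¹, gb, gb⁻¹}) := by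
  rw [← A.basicSet_eq hD hbD]
  rw [ga_zpow_mul_gb_zpow] at hsingle
  have hga : ga ≠ 1 := fun h => by simpa using congrArg xc h
  rcases A.zpow_singleton_or_pair hga ha with hsing | hpair
  · simp only [ga_zpow] at hsing
    exact .inl (A.basicSet_gb_eq_singleton hsing hsingle (by simpa using hj₀))
  · simp only [ga_zpow] at hpair
    obtain ⟨n₀, hn₀, hD⟩ := SchurRing.basicSet_gb_eq_pair hpair hj₀ hsingle
    refine .inr (.inl ⟨n₀, hn₀, ?_⟩)
    convert hD using 3
    exact ext_iff.mpr ⟨by simp, by simp⟩
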